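/- Continuity of frozen-parameter prediction error: under the hypotheses of the previous statement but with ε merely continuous (not constant), the prediction error satisfies ‖φ(t) − ψ(t)‖ ≤ (L·sup_{s∈[t₀,t]} ‖ε(s) − ε(t₀)‖ / K) · (e^{K(t−t₀)} − 1) for all t ≥ t₀, where L is a Lipschitz constant of (x, e) ↦ Φ(x, u(u°(t), x; e)) in e and K a Lipschitz constant in x, uniformly in t. In particular the short-term prediction error tends to 0 as t → t₀ faster than linearly when ε is continuous at t₀. -/
import Mathlib


/- STATEMENT 4: Grönwall-type bound for the frozen-parameter prediction error.
With f(t,x,e) = Φ(x, u(u°(t), x; e)) K-Lipschitz in x and L-Lipschitz in e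
(uniformly in t), φ' = f(t, φ, ε(t)), ψ' = f(t, ψ, ε(t₀)), φ(t₀) = ψ(t₀):
‖φ(t) − ψ(t)‖ ≤ (L · sup_{s∈[t₀,t]} ‖ε(s) − ε(t₀)‖ / K) · (e^{K(t−t₀)} − 1). -/
theorem frozen_epsilon_prediction_error_gronwall
    {n m p : ℕ} {E : Type*} [NormedAddCommGroup E]
    (Φ : EuclideanSpace ℝ (Fin n) → EuclideanSpace ℝ (Fin p) → EuclideanSpace ℝ (Fin n))
    (u : EuclideanSpace ℝ (Fin m) → EuclideanSpace ℝ (Fin n) → E → EuclideanSpace ℝ (Fin p))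
    (u0 : ℝ → EuclideanSpace ℝ (Fin m)) (hu0 : Continuous u0)
    (ε : ℝ → E) (hε : Continuous ε)
    (K L : ℝ) (hK : 0 < K) (hL : 0 ≤ L)
    -- f(t,x,e) = Φ(x, u(u°(t), x; e)) is K-Lipschitz in x, uniformly in (t,e):
    (hLipx : ∀ t e x y,
      ‖Φ x (u (u0 t) x e) - Φ y (u (u0 t) y e)‖ ≤ K * ‖x - y‖)
    -- and L-Lipschitz in e, uniformly in (t,x):
    (hLipe : ∀ t x e e',
      ‖Φ x (u (u0 t) x e) - Φ x (u (u0 t) x e')‖ ≤ L * ‖e - e'‖)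
    (t₀ : ℝ) (φ ψ : ℝ → EuclideanSpace ℝ (Fin n))
    (hφ : ∀ t, t₀ ≤ t → HasDerivAt φ (Φ (φ t) (u (u0 t) (φ t) (ε t))) t)
    (hψ : ∀ t, t₀ ≤ t → HasDerivAt ψ (Φ (ψ t) (u (u0 t) (ψ t) (ε t₀))) t)
    (hinit : φ t₀ = ψ t₀) :
    ∀ t, t₀ ≤ t →
      ‖φ t - ψ t‖ ≤
        L * (sSup ((fun s => ‖ε s - ε t₀‖) '' Set.Icc t₀ t)) / K *
          (Real.exp (K * (t - t₀)) - 1) := by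
  intro T hT
  set M : ℝ := sSup ((fun s => ‖ε s - ε t₀‖) '' Set.Icc t₀ T) with hM
  have hne : ((fun s => ‖ε s - ε t₀‖) '' Set.Icc t₀ T).Nonempty :=
    (Set.nonempty_Icc.2 hT).image _
  have hbdd : BddAbove ((fun s => ‖ε s - ε t₀‖) '' Set.Icc t₀ T) :=
    (isCompact_Icc.image (by continuity)).bddAbove
  have hMle : ∀ s ∈ Set.Icc t₀ T, ‖ε s - ε t₀‖ ≤ M := fun s hs =>
    le_csSup hbdd ⟨s, hs, rfl⟩
  -- the difference function
  set g : ℝ → EuclideanSpace ℝ (Fin n) := fun t => φ t - ψ t with hg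
  set g' : ℝ → EuclideanSpace ℝ (Fin n) := fun t =>
    Φ (φ t) (u (u0 t) (φ t) (ε t)) - Φ (ψ t) (u (u0 t) (ψ t) (ε t₀)) with hg'
  have hcont : ContinuousOn g (Set.Icc t₀ T) := fun t ht =>
    (((hφ t ht.1).sub (hψ t ht.1)).continuousAt).continuousWithinAt
  have hderiv : ∀ t ∈ Set.Ico t₀ T, HasDerivWithinAt g (g' t) (Set.Ici t) t :=
    fun t ht => (((hφ t ht.1).sub (hψ t ht.1)).hasDerivWithinAt)
  have hbound : ∀ t ∈ Set.Ico t₀ T, ‖g' t‖ ≤ K * ‖g t‖ + L * M := by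
    intro t ht
    have h1 := hLipx t (ε t₀) (φ t) (ψ t)
    have h2 := hLipe t (φ t) (ε t) (ε t₀)
    calc ‖g' t‖ = ‖(Φ (φ t) (u (u0 t) (φ t) (ε t)) - Φ (φ t) (u (u0 t) (φ t) (ε t₀)))
          + (Φ (φ t) (u (u0 t) (φ t) (ε t₀)) - Φ (ψ t) (u (u0 t) (ψ t) (ε t₀)))‖ := by
            rw [hg']; congr 1; abel
      _ ≤ ‖Φ (φ t) (u (u0 t) (φ t) (ε t)) - Φ (φ t) (u (u0 t) (φ t) (ε t₀))‖
          + ‖Φ (φ t) (u (u0 t) (φ t) (ε t₀)) - Φ (ψ t) (u (u0 t) (ψ t) (ε t₀))‖ :=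
            norm_add_le _ _
      _ ≤ L * ‖ε t - ε t₀‖ + K * ‖g t‖ := add_le_add h2 h1
      _ ≤ L * M + K * ‖g t‖ := by
            have := hMle t ⟨ht.1, le_of_lt ht.2⟩
            nlinarith
      _ = K * ‖g t‖ + L * M := by ring
  have ha : ‖g t₀‖ ≤ 0 := by simp [hg, hinit]
  have := norm_le_gronwallBound_of_norm_deriv_right_le hcont hderiv ha hbound T
    ⟨hT, le_rfl⟩
  rw [gronwallBound_of_K_ne_0 hK.ne'] at this
  simpa [hg, mul_div_assoc] using this
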